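/- For scalar features (d = 1): if Ẑ ~ ∑_i π_i N(μ_i, σ_i^2) and Z = Ẑ + ε with ε ~ N(0, σ_p^2), then I(Z; Ẑ) ≤ ∑_i π_i( -log π_i + (1/2) log(1 + σ_i^2/σ_p^2) ), and, with all σ_i and μ_i fixed, as σ_p → ∞ the term ∑_i π_i (1/2) log(1 + σ_i^2/σ_p^2) tends to 0, so the total bound tends to H(π). -/

import Mathlib

open MeasureTheory Real Finset Filter

/-- One-dimensional Gaussian density with mean `m` and variance `v`. -/
noncomputable def gauss1 (m v x : ℝ) : ℝ :=
  (Real.sqrt (2 * π * v))⁻¹ * Real.exp (-(x - m) ^ 2 / (2 * v))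

/-- Differential entropy of a density on `ℝ`. -/
noncomputable def diffEntropy1 (p : ℝ → ℝ) : ℝ :=
  -∫ x, p x * Real.log (p x)

lemma gauss1_pos {v : ℝ} (hv : 0 < v) (m x : ℝ) : 0 < gauss1 m v x := by
  unfold gauss1
  have h2 : 0 < 2 * π * v := by positivity
  positivity

lemma gauss1_eq (m v x : ℝ) :
    gauss1 m v x = (Real.sqrt (2 * π * v))⁻¹ * Real.exp (-(1 / (2 * v)) * (x - m) ^ 2) := by
  unfold gauss1
  congr 1
  rw [neg_div, div_eq_mul_inv, mul_comm]
  ring_nf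

lemma gauss1_le {v : ℝ} (hv : 0 < v) (m x : ℝ) :
    gauss1 m v x ≤ (Real.sqrt (2 * π * v))⁻¹ := by
  unfold gauss1
  have h2 : (0:ℝ) < 2 * π * v := by positivity
  have : Real.exp (-(x - m) ^ 2 / (2 * v)) ≤ 1 := by
    rw [Real.exp_le_one_iff]
    exact div_nonpos_of_nonpos_of_nonneg (neg_nonpos.mpr (sq_nonneg _)) (by positivity)
  calc (Real.sqrt (2 * π * v))⁻¹ * Real.exp (-(x - m) ^ 2 / (2 * v))
      ≤ (Real.sqrt (2 * π * v))⁻¹ * 1 := by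
        apply mul_le_mul_of_nonneg_left this (by positivity)
    _ = _ := mul_one _

lemma integrable_gauss1 {v : ℝ} (hv : 0 < v) (m : ℝ) : Integrable (gauss1 m v) := by
  have hb : (0:ℝ) < 1 / (2 * v) := by positivity
  have h := ((integrable_exp_neg_mul_sq hb).comp_sub_right m).const_mul
    (Real.sqrt (2 * π * v))⁻¹
  exact h.congr (Filter.Eventually.of_forall fun x => (gauss1_eq m v x).symm)

lemma integral_gauss1 {v : ℝ} (hv : 0 < v) (m : ℝ) : ∫ x, gauss1 m v x = 1 := by
  have hb : (0:ℝ) < 1 / (2 * v) := by positivity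
  have h2 : (0:ℝ) < 2 * π * v := by positivity
  calc ∫ x, gauss1 m v x
      = ∫ x, (Real.sqrt (2 * π * v))⁻¹ * Real.exp (-(1 / (2 * v)) * (x - m) ^ 2) := by
        simp_rw [gauss1_eq]
    _ = (Real.sqrt (2 * π * v))⁻¹ * ∫ x, Real.exp (-(1 / (2 * v)) * (x - m) ^ 2) :=
        integral_const_mul _ _
    _ = (Real.sqrt (2 * π * v))⁻¹ * ∫ x, Real.exp (-(1 / (2 * v)) * x ^ 2) := by
        rw [integral_sub_right_eq_self (fun y => Real.exp (-(1 / (2 * v)) * y ^ 2)) m]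
    _ = (Real.sqrt (2 * π * v))⁻¹ * Real.sqrt (π / (1 / (2 * v))) := by
        rw [integral_gaussian]
    _ = 1 := by
        rw [show π / (1 / (2 * v)) = 2 * π * v by field_simp]
        exact inv_mul_cancel₀ (by positivity)

lemma integrable_sq_mul_exp {b : ℝ} (hb : 0 < b) :
    Integrable (fun x : ℝ => x ^ 2 * Real.exp (-b * x ^ 2)) := by
  have h := integrable_rpow_mul_exp_neg_mul_sq hb (s := 2) (by norm_num)
  have h2 : ∀ x : ℝ, x ^ (2:ℝ) = x ^ (2:ℕ) := fun x => by
    rw [← Real.rpow_natCast x 2]; norm_num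
  simpa [h2] using h

lemma integral_sq_mul_exp {b : ℝ} (hb : 0 < b) :
    ∫ x : ℝ, x ^ 2 * Real.exp (-b * x ^ 2) = (1 / (2 * b)) * Real.sqrt (π / b) := by
  set F : ℝ → ℝ := fun x => x * Real.exp (-b * x ^ 2) with hF
  set F' : ℝ → ℝ := fun x => Real.exp (-b * x ^ 2) - (2 * b) * (x ^ 2 * Real.exp (-b * x ^ 2))
    with hF'
  have hderiv : ∀ x : ℝ, HasDerivAt F (F' x) x := by
    intro x
    have h0 : HasDerivAt (fun x : ℝ => -b * x ^ 2) (-b * (2 * x ^ 1)) x :=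
      (hasDerivAt_pow 2 x).const_mul (-b)
    have h1 := h0.exp
    have h2 : HasDerivAt F (1 * Real.exp (-b * x ^ 2) + x * (Real.exp (-b * x ^ 2) * (-b * (2 * x ^ 1)))) x :=
      (hasDerivAt_id x).mul h1
    convert h2 using 1
    simp only [F']
    ring
  have hFtop : Tendsto F atTop (nhds 0) := by
    have ho := rpow_mul_exp_neg_mul_sq_isLittleO_exp_neg hb 1
    have hexp : Tendsto (fun x : ℝ => Real.exp (-(1/2) * x)) atTop (nhds 0) := by
      have : Tendsto (fun x : ℝ => -(1/2) * x) atTop atBot :=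
        Tendsto.const_mul_atTop_of_neg (by norm_num) tendsto_id
      exact Real.tendsto_exp_atBot.comp this
    have := ho.trans_tendsto hexp
    refine this.congr' ?_
    filter_upwards [eventually_ge_atTop (0:ℝ)] with x hx
    rw [Real.rpow_one]
  have hFbot : Tendsto F atBot (nhds 0) := by
    have h1 : Tendsto (fun x => F (-x)) atBot (nhds 0) :=
      hFtop.comp tendsto_neg_atBot_atTop
    have h2 : (fun x => F (-x)) = fun x => -F x := by
      funext x; simp only [F]; ring
    rw [h2] at h1
    simpa using h1.neg
  have hint : Integrable F' := by
    exact (integrable_exp_neg_mul_sq hb).sub ((integrable_sq_mul_exp hb).const_mul (2*b))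
  have hIoi : ∫ x in Set.Ioi (0:ℝ), F' x = 0 - F 0 :=
    integral_Ioi_of_hasDerivAt_of_tendsto' (fun x _ => hderiv x) hint.integrableOn hFtop
  have hIic : ∫ x in Set.Iic (0:ℝ), F' x = F 0 - 0 :=
    integral_Iic_of_hasDerivAt_of_tendsto' (fun x _ => hderiv x) hint.integrableOn hFbot
  have hsplit : (∫ x in Set.Iic (0:ℝ), F' x) + ∫ x in Set.Ioi (0:ℝ), F' x = ∫ x, F' x :=
    intervalIntegral.integral_Iic_add_Ioi hint.integrableOn hint.integrableOn
  have hzero : ∫ x, F' x = 0 := by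
    rw [← hsplit, hIoi, hIic]; simp [F]
  have hsub : ∫ x, F' x =
      (∫ x, Real.exp (-b * x ^ 2)) - (2 * b) * ∫ x, x ^ 2 * Real.exp (-b * x ^ 2) := by
    rw [hF']
    rw [integral_sub (integrable_exp_neg_mul_sq hb) ((integrable_sq_mul_exp hb).const_mul (2*b)),
      integral_const_mul]
  rw [hzero] at hsub
  rw [integral_gaussian] at hsub
  have hb2 : (2 * b) ≠ 0 := by positivity
  field_simp at hsub ⊢
  linarith

lemma integrable_sq_gauss1 {v : ℝ} (hv : 0 < v) (m : ℝ) :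
    Integrable (fun x => (x - m) ^ 2 * gauss1 m v x) := by
  have hb : (0:ℝ) < 1 / (2 * v) := by positivity
  have h := (((integrable_sq_mul_exp hb).comp_sub_right m).const_mul
    (Real.sqrt (2 * π * v))⁻¹)
  refine h.congr (Filter.Eventually.of_forall fun x => ?_)
  simp only [gauss1_eq]; ring

lemma integral_sq_gauss1 {v : ℝ} (hv : 0 < v) (m : ℝ) :
    ∫ x, (x - m) ^ 2 * gauss1 m v x = v := by
  have hb : (0:ℝ) < 1 / (2 * v) := by positivity
  have h2 : (0:ℝ) < 2 * π * v := by positivity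
  calc ∫ x, (x - m) ^ 2 * gauss1 m v x
      = ∫ x, (Real.sqrt (2 * π * v))⁻¹ *
          ((x - m) ^ 2 * Real.exp (-(1 / (2 * v)) * (x - m) ^ 2)) := by
        congr 1; funext x; rw [gauss1_eq]; ring
    _ = (Real.sqrt (2 * π * v))⁻¹ *
          ∫ x, (x - m) ^ 2 * Real.exp (-(1 / (2 * v)) * (x - m) ^ 2) :=
        integral_const_mul _ _
    _ = (Real.sqrt (2 * π * v))⁻¹ *
          ∫ x, x ^ 2 * Real.exp (-(1 / (2 * v)) * x ^ 2) := by
        rw [integral_sub_right_eq_self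
          (fun y => y ^ 2 * Real.exp (-(1 / (2 * v)) * y ^ 2)) m]
    _ = (Real.sqrt (2 * π * v))⁻¹ * ((1 / (2 * (1 / (2 * v)))) *
          Real.sqrt (π / (1 / (2 * v)))) := by rw [integral_sq_mul_exp hb]
    _ = v := by
        rw [show π / (1 / (2 * v)) = 2 * π * v by field_simp,
          show (1 / (2 * (1 / (2 * v)))) = v by field_simp]
        rw [mul_comm]
        field_simp

lemma gauss1_log_eq {v : ℝ} (hv : 0 < v) (m x : ℝ) :
    gauss1 m v x * Real.log (gauss1 m v x)
      = (-(1/2) * Real.log (2 * π * v)) * gauss1 m v x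
        - (1 / (2 * v)) * ((x - m) ^ 2 * gauss1 m v x) := by
  have h2 : (0:ℝ) < 2 * π * v := by positivity
  have hs : Real.sqrt (2 * π * v) ≠ 0 := by positivity
  unfold gauss1
  rw [Real.log_mul (inv_ne_zero hs) (Real.exp_ne_zero _), Real.log_inv, Real.log_exp,
    Real.log_sqrt h2.le]
  ring

lemma integrable_gauss1_mul_log {v : ℝ} (hv : 0 < v) (m : ℝ) :
    Integrable (fun x => gauss1 m v x * Real.log (gauss1 m v x)) := by
  refine (((integrable_gauss1 hv m).const_mul (-(1/2) * Real.log (2 * π * v))).sub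
    ((integrable_sq_gauss1 hv m).const_mul (1 / (2 * v)))).congr
    (Filter.Eventually.of_forall fun x => ?_)
  simpa using (gauss1_log_eq hv m x).symm

lemma integral_gauss1_mul_log {v : ℝ} (hv : 0 < v) (m : ℝ) :
    ∫ x, gauss1 m v x * Real.log (gauss1 m v x)
      = -(1/2) * Real.log (2 * π * v) - 1/2 := by
  simp_rw [gauss1_log_eq hv m]
  rw [integral_sub ((integrable_gauss1 hv m).const_mul _)
      ((integrable_sq_gauss1 hv m).const_mul (1 / (2 * v))),
    integral_const_mul, integral_const_mul, integral_gauss1 hv, integral_sq_gauss1 hv]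
  have hvne : v ≠ 0 := hv.ne'
  field_simp

lemma continuous_gauss1 (m v : ℝ) : Continuous (gauss1 m v) := by
  unfold gauss1
  fun_prop

/-- For scalar features (`d = 1`): if `Ẑ ~ ∑ π_i N(μ_i, σ_i²)` and
`Z = Ẑ + ε` with `ε ~ N(0, σ_p²)`, then
`I(Z;Ẑ) = H(Z) - H(ε) ≤ ∑ π_i(-log π_i + (1/2) log(1 + σ_i²/σ_p²))`; moreover as
`σ_p → ∞` (with the `σ_i, μ_i` fixed) the second summand tends to `0` and the total
bound tends to the discrete entropy `H(π) = ∑ -π_i log π_i`. -/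
theorem scalar_mutual_info_bound_and_limits {k : ℕ}
    (w : Fin k → ℝ) (μ σ : Fin k → ℝ)
    (hw : ∀ i, 0 < w i) (hsum : ∑ i, w i = 1) (hσ : ∀ i, 0 < σ i) :
    (∀ σp : ℝ, 0 < σp →
      diffEntropy1 (fun z => ∑ i, w i * gauss1 (μ i) (σ i ^ 2 + σp ^ 2) z)
          - (1 / 2) * Real.log (2 * π * Real.exp 1 * σp ^ 2)
        ≤ ∑ i, w i * (-Real.log (w i) + (1 / 2) * Real.log (1 + σ i ^ 2 / σp ^ 2))) ∧
    Tendsto (fun σp : ℝ => ∑ i, w i * ((1 / 2) * Real.log (1 + σ i ^ 2 / σp ^ 2)))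
      atTop (nhds 0) ∧
    Tendsto (fun σp : ℝ =>
        ∑ i, w i * (-Real.log (w i) + (1 / 2) * Real.log (1 + σ i ^ 2 / σp ^ 2)))
      atTop (nhds (∑ i, -w i * Real.log (w i))) := by
  have hk : Nonempty (Fin k) := by
    rcases Nat.eq_zero_or_pos k with rfl | hk
    · simp at hsum
    · exact ⟨⟨0, hk⟩⟩
  have h2 : Tendsto (fun σp : ℝ => ∑ i, w i * ((1 / 2) * Real.log (1 + σ i ^ 2 / σp ^ 2)))
      atTop (nhds 0) := by
    have hterm : ∀ i : Fin k,
        Tendsto (fun σp : ℝ => w i * ((1 / 2) * Real.log (1 + σ i ^ 2 / σp ^ 2)))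
          atTop (nhds 0) := by
      intro i
      have hsq : Tendsto (fun σp : ℝ => σp ^ 2) atTop atTop :=
        tendsto_pow_atTop (two_ne_zero)
      have hdiv : Tendsto (fun σp : ℝ => σ i ^ 2 / σp ^ 2) atTop (nhds 0) :=
        Tendsto.div_atTop tendsto_const_nhds hsq
      have hone : Tendsto (fun σp : ℝ => 1 + σ i ^ 2 / σp ^ 2) atTop (nhds 1) := by
        simpa using hdiv.const_add 1
      have hlog : Tendsto (fun σp : ℝ => Real.log (1 + σ i ^ 2 / σp ^ 2)) atTop (nhds 0) := by
        have := ((Real.continuousAt_log one_ne_zero).tendsto).comp hone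
        simpa [Function.comp_def] using this
      simpa using (hlog.const_mul ((1:ℝ)/2)).const_mul (w i)
    have := tendsto_finset_sum Finset.univ (fun i _ => hterm i)
    simpa using this
  refine ⟨?_, h2, ?_⟩
  · intro σp hσp
    set v : Fin k → ℝ := fun i => σ i ^ 2 + σp ^ 2 with hv
    have hvi : ∀ i, 0 < v i := fun i => by positivity
    set p : Fin k → ℝ → ℝ := fun i => gauss1 (μ i) (v i) with hp
    set f : ℝ → ℝ := fun z => ∑ i, w i * p i z with hfdef
    have hppos : ∀ i x, 0 < p i x := fun i x => gauss1_pos (hvi i) _ _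
    have hfpos : ∀ x, 0 < f x := fun x =>
      Finset.sum_pos (fun i _ => mul_pos (hw i) (hppos i x)) Finset.univ_nonempty
    set C : ℝ := ∑ j, w j * (Real.sqrt (2 * π * v j))⁻¹ with hC
    have hCpos : 0 < C :=
      Finset.sum_pos (fun j _ => mul_pos (hw j) (by
        have h0 : (0:ℝ) < 2 * π * v j := by positivity
        positivity)) Finset.univ_nonempty
    have hfleC : ∀ x, f x ≤ C := fun x =>
      Finset.sum_le_sum fun i _ =>
        mul_le_mul_of_nonneg_left (gauss1_le (hvi i) _ _) (hw i).le
    have hwple : ∀ i x, w i * p i x ≤ f x := fun i x =>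
      Finset.single_le_sum (fun j _ => (mul_pos (hw j) (hppos j x)).le) (Finset.mem_univ i)
    have hcont_f : Continuous f :=
      continuous_finset_sum _ fun i _ => continuous_const.mul (continuous_gauss1 _ _)
    have hcont_logf : Continuous fun x => Real.log (f x) :=
      hcont_f.log fun x => (hfpos x).ne'
    -- integrability of  w i * p i x * log (f x)
    have hInt_h : ∀ i : Fin k, Integrable (fun x => w i * p i x * Real.log (f x)) := by
      intro i
      set a : ℝ := Real.log (w i) - (1/2) * Real.log (2 * π * v i) with ha
      set b : ℝ := 1 / (2 * v i) with hb
      have hbpos : 0 < b := by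
        rw [hb]; have := hvi i; positivity
      have hlogp : ∀ x, Real.log (p i x)
          = -(1/2) * Real.log (2 * π * v i) - b * (x - μ i) ^ 2 := by
        intro x
        have h2v : (0:ℝ) < 2 * π * v i := by have := hvi i; positivity
        show Real.log (gauss1 (μ i) (v i) x) = _
        unfold gauss1
        rw [Real.log_mul (inv_ne_zero (by positivity)) (Real.exp_ne_zero _), Real.log_inv,
          Real.log_exp, Real.log_sqrt h2v.le]
        rw [hb]
        have : v i ≠ 0 := (hvi i).ne'
        field_simp
        ring
      have hlogwp : ∀ x, Real.log (w i * p i x) = a - b * (x - μ i) ^ 2 := by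
        intro x
        rw [Real.log_mul (hw i).ne' (hppos i x).ne', hlogp x, ha]
        ring
      have hmaj : Integrable (fun x =>
          (w i * (|a| + |Real.log C|)) * p i x + (w i * b) * ((x - μ i) ^ 2 * p i x)) :=
        ((integrable_gauss1 (hvi i) (μ i)).const_mul _).add
          ((integrable_sq_gauss1 (hvi i) (μ i)).const_mul _)
      refine Integrable.mono' hmaj ?_ (Filter.Eventually.of_forall fun x => ?_)
      · exact ((continuous_const.mul (continuous_gauss1 _ _)).mul hcont_logf).aestronglyMeasurable
      · have hwppos : 0 < w i * p i x := mul_pos (hw i) (hppos i x)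
        have hbx : 0 ≤ b * (x - μ i) ^ 2 := by positivity
        have hlog_up : Real.log (f x) ≤ Real.log C := Real.log_le_log (hfpos x) (hfleC x)
        have hlog_lo : a - b * (x - μ i) ^ 2 ≤ Real.log (f x) := by
          rw [← hlogwp x]
          exact Real.log_le_log hwppos (hwple i x)
        have habs : |Real.log (f x)| ≤ |a| + |Real.log C| + b * (x - μ i) ^ 2 := by
          rw [abs_le]
          constructor
          · have h1 := neg_abs_le a
            have h2 := abs_nonneg (Real.log C)
            linarith
          · have h1 := le_abs_self (Real.log C)
            have h2 := abs_nonneg a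
            linarith
        rw [Real.norm_eq_abs, abs_mul, abs_of_pos hwppos]
        calc w i * p i x * |Real.log (f x)|
            ≤ w i * p i x * (|a| + |Real.log C| + b * (x - μ i) ^ 2) :=
              mul_le_mul_of_nonneg_left habs hwppos.le
          _ = (w i * (|a| + |Real.log C|)) * p i x + (w i * b) * ((x - μ i) ^ 2 * p i x) := by
              ring
    -- g i and its integral
    have hgi_eq : ∀ (i : Fin k) (x : ℝ), w i * p i x * Real.log (w i * p i x)
        = (w i * Real.log (w i)) * p i x + w i * (p i x * Real.log (p i x)) := by
      intro i x
      rw [Real.log_mul (hw i).ne' (hppos i x).ne']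
      ring
    have hInt_g : ∀ i : Fin k, Integrable (fun x => w i * p i x * Real.log (w i * p i x)) := by
      intro i
      refine (((integrable_gauss1 (hvi i) (μ i)).const_mul (w i * Real.log (w i))).add
        ((integrable_gauss1_mul_log (hvi i) (μ i)).const_mul (w i))).congr
        (Filter.Eventually.of_forall fun x => ?_)
      simpa using (hgi_eq i x).symm
    have hval_g : ∀ i : Fin k, ∫ x, w i * p i x * Real.log (w i * p i x)
        = w i * Real.log (w i) + w i * (-(1/2) * Real.log (2 * π * v i) - 1/2) := by
      intro i
      simp_rw [hgi_eq i]
      rw [integral_add ((integrable_gauss1 (hvi i) (μ i)).const_mul _)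
          ((integrable_gauss1_mul_log (hvi i) (μ i)).const_mul _),
        integral_const_mul, integral_const_mul, integral_gauss1 (hvi i),
        integral_gauss1_mul_log (hvi i)]
      ring
    -- pointwise and integral comparison
    have hIle : ∀ i : Fin k, ∫ x, w i * p i x * Real.log (w i * p i x)
        ≤ ∫ x, w i * p i x * Real.log (f x) := by
      intro i
      refine integral_mono (hInt_g i) (hInt_h i) fun x => ?_
      exact mul_le_mul_of_nonneg_left
        (Real.log_le_log (mul_pos (hw i) (hppos i x)) (hwple i x))
        (mul_pos (hw i) (hppos i x)).le
    have hint_flogf : ∫ x, f x * Real.log (f x)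
        = ∑ i, ∫ x, w i * p i x * Real.log (f x) := by
      rw [← integral_finset_sum _ fun i _ => hInt_h i]
      congr 1
      funext x
      rw [← Finset.sum_mul]
    have hB : diffEntropy1 f ≤ -∑ i, ∫ x, w i * p i x * Real.log (w i * p i x) := by
      unfold diffEntropy1
      have h1 : ∑ i, ∫ x, w i * p i x * Real.log (w i * p i x)
          ≤ ∫ x, f x * Real.log (f x) := by
        rw [hint_flogf]
        exact Finset.sum_le_sum fun i _ => hIle i
      linarith
    have hA : ∑ i, ∫ x, w i * p i x * Real.log (w i * p i x)
        = ∑ i, (w i * Real.log (w i) + w i * (-(1/2) * Real.log (2 * π * v i) - 1/2)) :=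
      Finset.sum_congr rfl fun i _ => hval_g i
    -- per-index log algebra
    have hper : ∀ i : Fin k, (1/2) * Real.log (2 * π * v i) + 1/2
        = 1 / 2 * Real.log (1 + σ i ^ 2 / σp ^ 2)
          + 1 / 2 * Real.log (2 * π * Real.exp 1 * σp ^ 2) := by
      intro i
      have h1pos : (0:ℝ) < 1 + σ i ^ 2 / σp ^ 2 := by positivity
      have h2pos : (0:ℝ) < 2 * π * Real.exp 1 * σp ^ 2 := by positivity
      have h3pos : (0:ℝ) < 2 * π * v i := by have := hvi i; positivity
      have hprod : (1 + σ i ^ 2 / σp ^ 2) * (2 * π * Real.exp 1 * σp ^ 2)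
          = (2 * π * v i) * Real.exp 1 := by
        rw [hv]
        field_simp
        ring
      have h4 : Real.log (1 + σ i ^ 2 / σp ^ 2) + Real.log (2 * π * Real.exp 1 * σp ^ 2)
          = Real.log (2 * π * v i) + 1 := by
        rw [← Real.log_mul h1pos.ne' h2pos.ne', hprod,
          Real.log_mul h3pos.ne' (Real.exp_ne_zero 1), Real.log_exp]
      linarith
    have hterm : ∀ i ∈ Finset.univ, w i * Real.log (w i)
          + w i * (-(1/2) * Real.log (2 * π * v i) - 1/2)
        = -((w i * (-Real.log (w i) + 1 / 2 * Real.log (1 + σ i ^ 2 / σp ^ 2)))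
            + w i * (1 / 2 * Real.log (2 * π * Real.exp 1 * σp ^ 2))) := by
      intro i _
      have h := hper i
      calc w i * Real.log (w i) + w i * (-(1/2) * Real.log (2 * π * v i) - 1/2)
          = w i * Real.log (w i) - w i * ((1/2) * Real.log (2 * π * v i) + 1/2) := by ring
        _ = w i * Real.log (w i) - w i * (1 / 2 * Real.log (1 + σ i ^ 2 / σp ^ 2)
              + 1 / 2 * Real.log (2 * π * Real.exp 1 * σp ^ 2)) := by rw [h]
        _ = _ := by ring
    have hA2 : ∑ i, (w i * Real.log (w i) + w i * (-(1/2) * Real.log (2 * π * v i) - 1/2))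
        = -((∑ i, w i * (-Real.log (w i) + 1 / 2 * Real.log (1 + σ i ^ 2 / σp ^ 2)))
            + 1 / 2 * Real.log (2 * π * Real.exp 1 * σp ^ 2)) := by
      rw [Finset.sum_congr rfl hterm, Finset.sum_neg_distrib, Finset.sum_add_distrib,
        ← Finset.sum_mul, hsum, one_mul]
    rw [hA, hA2] at hB
    linarith
  · have heq : ∀ s : ℝ, ∑ i, w i * (-Real.log (w i) + (1 / 2) * Real.log (1 + σ i ^ 2 / s ^ 2))
        = (∑ i, -w i * Real.log (w i))
          + ∑ i, w i * ((1 / 2) * Real.log (1 + σ i ^ 2 / s ^ 2)) := by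
      intro s
      rw [← Finset.sum_add_distrib]
      exact Finset.sum_congr rfl fun i _ => by ring
    have := (tendsto_const_nhds (x := ∑ i, -w i * Real.log (w i)) (f := atTop)).add h2
    rw [add_zero] at this
    exact this.congr fun s => (heq s).symm
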